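/- arXiv:1011.1294 — 4 statements merged into one kernel-verified Lean document; each statement's English description precedes it below -/
import Mathlib

section
/- Let a, b be positive integers with a + b = n. The meander graph M(a, b | n) consists of a single path if and only if gcd(a, n) = 1. -/
/-- Two (1-based) positions `u v` are joined by an arc determined by the
composition `L`: they lie in a common block of `L` and are reflections of each
other across the middle of that block. -/
def blockAdj (L : List ℕ) (u v : ℕ) : Prop :=
  ∃ k < L.length,
    (L.take k).sum < u ∧ u ≤ (L.take (k + 1)).sum ∧
    (L.take k).sum < v ∧ v ≤ (L.take (k + 1)).sum ∧
    u + v = (L.take k).sum + (L.take (k + 1)).sum + 1 ∧ u ≠ v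

/-- The meander graph `M(x | y)` on vertices `{1, …, n}` (represented by
`Fin n`, vertex `i` corresponding to the number `i + 1`): top edges come from
the blocks of `x`, bottom edges from the blocks of `y`. -/
def meander (x y : List ℕ) (n : ℕ) : SimpleGraph (Fin n) where
  Adj i j := blockAdj x ((i : ℕ) + 1) ((j : ℕ) + 1) ∨ blockAdj y ((i : ℕ) + 1) ((j : ℕ) + 1)
  symm := by
    constructor
    rintro i j (⟨k, hk, h1, h2, h3, h4, h5, h6⟩ | ⟨k, hk, h1, h2, h3, h4, h5, h6⟩)
    · exact Or.inl ⟨k, hk, h3, h4, h1, h2, by omega, by omega⟩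
    · exact Or.inr ⟨k, hk, h3, h4, h1, h2, by omega, by omega⟩
  loopless := by
    constructor
    rintro i (⟨k, hk, h1, h2, h3, h4, h5, h6⟩ | ⟨k, hk, h1, h2, h3, h4, h5, h6⟩) <;> omega

/-- A graph on `Fin n` consists of a single path when it is isomorphic to the
path graph on `n` vertices. -/
def IsSinglePath {n : ℕ} (G : SimpleGraph (Fin n)) : Prop :=
  Nonempty (G ≃g SimpleGraph.pathGraph n)

/-!
Number the vertices of `M(a, b | n)` by `ℤ/n`. The top arcs join `u ≠ v` exactly when
`u + v = a + 1` and the bottom arcs exactly when `u + v = 1`, so the graph is the union of the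
matchings of the reflections `u ↦ a + 1 - u` and `u ↦ 1 - u`, whose composite is a translation
by `a`.

If `gcd(a, n) = 1`, then `a + 1 = 2c` for some `c` (as `a` and `n` are not both even), and the
affine change of variables `u ↦ a⁻¹ (u - c)` turns the two reflections into `u ↦ -u` and
`u ↦ -1 - u`; for these the path is `0, -1, 1, -2, 2, …`.

If an odd prime `p` divides `a` and `n`, then `u + v ≡ 1 (mod p)` along every edge, so the
vertices `≡ 0, 1 (mod p)` are not joined to `2`. If `2` divides `a` and `n`, neither reflection
has a fixed point, so every vertex has two neighbours and the path has no end.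
-/

open SimpleGraph Function

def reflectionGraph {R : Type*} [AddCommMagma R] (s t : R) : SimpleGraph R where
  Adj u v := u ≠ v ∧ (u + v = s ∨ u + v = t)
  symm := ⟨fun u v ⟨hne, h⟩ => ⟨hne.symm, by rwa [add_comm v u]⟩⟩
  loopless := ⟨fun _ h => h.1 rfl⟩

@[simp]
lemma reflectionGraph_adj {R : Type*} [AddCommMagma R] {s t u v : R} :
    (reflectionGraph s t).Adj u v ↔ u ≠ v ∧ (u + v = s ∨ u + v = t) :=
  Iff.rfl

def reflectionGraphAffineIso {R : Type*} [CommRing R] (w : Rˣ) (c : R) {s t s' t' : R}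
    (hs : w * (s - (c + c)) = s') (ht : w * (t - (c + c)) = t') :
    reflectionGraph s t ≃g reflectionGraph s' t' where
  toEquiv := (Equiv.subRight c).trans (Units.mulLeft w)
  map_rel_iff' {u v} := by
    have hsum : ∀ r r', w * (r - (c + c)) = r' → (w * (u - c) + w * (v - c) = r' ↔ u + v = r) := by
      rintro r _ rfl
      rw [show w * (u - c) + w * (v - c) = w * (u + v - (c + c)) by ring, Units.mul_right_inj,
        sub_left_inj]
    simp only [Equiv.trans_apply, Equiv.subRight_apply, Units.mulLeft_apply, reflectionGraph_adj,
      ne_eq, Units.mul_right_inj, sub_left_inj, hsum s s' hs, hsum t t' ht]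

lemma reflectionGraph_exists_two_adj {R : Type*} [AddCommGroup R] {s t : R} (hst : s ≠ t)
    (hs : ∀ u, u + u ≠ s) (ht : ∀ u, u + u ≠ t) (u : R) :
    ∃ w₁ w₂, w₁ ≠ w₂ ∧ (reflectionGraph s t).Adj u w₁ ∧ (reflectionGraph s t).Adj u w₂ :=
  ⟨s - u, t - u, fun h => hst (sub_left_injective h),
    ⟨fun h => hs u (eq_sub_iff_add_eq.1 h), .inl (add_sub_cancel u s)⟩,
    ⟨fun h => ht u (eq_sub_iff_add_eq.1 h), .inr (add_sub_cancel u t)⟩⟩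

lemma isEmpty_iso_pathGraph_of_forall_exists_two_adj {V : Type*} {G : SimpleGraph V} {n : ℕ}
    (hn : 0 < n) (h : ∀ v, ∃ w₁ w₂, w₁ ≠ w₂ ∧ G.Adj v w₁ ∧ G.Adj v w₂) :
    IsEmpty (G ≃g pathGraph n) := by
  refine ⟨fun e => ?_⟩
  obtain ⟨w₁, w₂, hne, h₁, h₂⟩ := h (e.symm ⟨0, hn⟩)
  have hone : ∀ w, G.Adj (e.symm ⟨0, hn⟩) w → (e w : ℕ) = 1 := fun w hw => by
    have := e.map_adj_iff.2 hw
    rw [e.apply_symm_apply, pathGraph_adj, Fin.val_mk] at this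
    omega
  exact hne (e.injective (Fin.ext ((hone w₁ h₁).trans (hone w₂ h₂).symm)))

lemma Int.eq_neg_or_eq_zero_or_eq_of_dvd {n x : ℤ} (h : n ∣ x) (h₁ : -n ≤ x) (h₂ : x ≤ n) :
    x = -n ∨ x = 0 ∨ x = n := by
  rcases (abs_le.2 ⟨h₁, h₂⟩).lt_or_eq with hlt | heq
  · exact .inr (.inl (Int.eq_zero_of_abs_lt_dvd h hlt))
  · rcases (abs_eq (by omega)).1 heq with h | h <;> simp [h]

def zigzag (j : ℕ) : ℤ := if j % 2 = 0 then (j / 2 : ℕ) else -((j + 1) / 2 : ℕ)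

lemma zigzag_bounds {n j : ℕ} (hj : j < n) :
    -((n : ℤ) / 2) ≤ zigzag j ∧ zigzag j ≤ ((n : ℤ) - 1) / 2 := by
  unfold zigzag
  split_ifs <;> omega

lemma zigzag_injOn_zmod {n j j' : ℕ} (hj : j < n) (hj' : j' < n)
    (h : (zigzag j : ZMod n) = zigzag j') : j = j' := by
  rw [ZMod.intCast_eq_intCast_iff_dvd_sub] at h
  have hbj := zigzag_bounds hj
  have hbj' := zigzag_bounds hj'
  have hdiff := Int.eq_neg_or_eq_zero_or_eq_of_dvd h (by omega) (by omega)
  unfold zigzag at hdiff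
  split_ifs at hdiff <;> omega

lemma reflectionGraph_adj_zigzag_iff {n j j' : ℕ} (hj : j < n) (hj' : j' < n) :
    (reflectionGraph (0 : ZMod n) (-1)).Adj (zigzag j) (zigzag j') ↔ j + 1 = j' ∨ j' + 1 = j := by
  have hne : (zigzag j : ZMod n) ≠ zigzag j' ↔ j ≠ j' :=
    ⟨fun h hjj => h (hjj ▸ rfl), fun h hz => h (zigzag_injOn_zmod hj hj' hz)⟩
  have hzero : (zigzag j : ZMod n) + zigzag j' = 0 ↔ (n : ℤ) ∣ zigzag j + zigzag j' := by
    rw [← ZMod.intCast_zmod_eq_zero_iff_dvd, Int.cast_add]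
  have hneg : (zigzag j : ZMod n) + zigzag j' = -1 ↔ (n : ℤ) ∣ zigzag j + zigzag j' + 1 := by
    rw [← ZMod.intCast_zmod_eq_zero_iff_dvd, eq_neg_iff_add_eq_zero]
    push_cast
    rfl
  rw [reflectionGraph_adj, hne, hzero, hneg]
  have hbj := zigzag_bounds hj
  have hbj' := zigzag_bounds hj'
  constructor
  · rintro ⟨hjj, h | h⟩ <;>
      have hsum := Int.eq_neg_or_eq_zero_or_eq_of_dvd h (by omega) (by omega) <;>
      unfold zigzag at hsum <;>
      split_ifs at hsum <;> omega
  · intro h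
    have hsum : zigzag j + zigzag j' = 0 ∨ zigzag j + zigzag j' + 1 = 0 := by
      unfold zigzag
      split_ifs <;> omega
    exact ⟨by omega, hsum.imp (fun h => by simp [h]) (fun h => by simp [h])⟩

noncomputable def equivZModOfInjective {n : ℕ} [NeZero n] (f : Fin n → ZMod n) (hf : Injective f) :
    Fin n ≃ ZMod n :=
  Equiv.ofBijective f ((Fintype.bijective_iff_injective_and_card f).2 ⟨hf, by simp⟩)

noncomputable def pathGraphIsoReflectionGraph (n : ℕ) [NeZero n] :
    pathGraph n ≃g reflectionGraph (0 : ZMod n) (-1) where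
  toEquiv := equivZModOfInjective (fun j => (zigzag j : ZMod n))
    fun j j' h => Fin.ext (zigzag_injOn_zmod j.2 j'.2 h)
  map_rel_iff' {j j'} := by
    rw [pathGraph_adj]
    exact reflectionGraph_adj_zigzag_iff j.2 j'.2

lemma meander_pair_single_adj_iff {a b n : ℕ} (hab : a + b = n) (i j : Fin n) :
    (meander [a, b] [n] n).Adj i j ↔ i ≠ j ∧
      ((i : ℕ) + j + 2 = a + 1 ∨ (i : ℕ) + j + 2 = a + 1 + n ∨ (i : ℕ) + j + 2 = n + 1) := by
  have hi := i.isLt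
  have hj := j.isLt
  rw [← Fin.val_ne_iff]
  constructor
  · rintro (⟨k, hk, h⟩ | ⟨k, hk, h⟩) <;> simp only [List.length_cons, List.length_nil] at hk
    · obtain rfl | rfl : k = 0 ∨ k = 1 := by omega
      all_goals
        simp only [List.take, List.sum_cons, List.sum_nil] at h
        omega
    · obtain rfl : k = 0 := by omega
      simp only [List.take, List.sum_cons, List.sum_nil] at h
      omega
  · rintro ⟨hne, h | h | h⟩
    · refine .inl ⟨0, by simp, ?_⟩
      simp only [List.take, List.sum_cons, List.sum_nil]
      omega
    · refine .inl ⟨1, by simp, ?_⟩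
      simp only [List.take, List.sum_cons, List.sum_nil]
      omega
    · refine .inr ⟨0, by simp, ?_⟩
      simp only [List.take, List.sum_cons, List.sum_nil]
      omega

lemma ZMod.natCast_eq_natCast_iff_of_le_two_mul {n x y : ℕ} (hy : 0 < y) (hyn : y ≤ n)
    (hx : 0 < x) (hxn : x ≤ 2 * n) : (x : ZMod n) = y ↔ x = y ∨ x = y + n := by
  rw [ZMod.natCast_eq_natCast_iff, Nat.modEq_iff_dvd]
  constructor
  · rintro ⟨k, hk⟩
    have : -1 ≤ k := by nlinarith
    have : k ≤ 0 := by nlinarith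
    interval_cases k <;> omega
  · rintro (rfl | rfl)
    · simp
    · exact ⟨-1, by push_cast; ring⟩

lemma ZMod.natCast_finVal_injective (n : ℕ) : Injective fun i : Fin n => ((i : ℕ) : ZMod n) :=
  fun i j h => Fin.ext <| by
    simpa [ZMod.val_cast_of_lt i.2, ZMod.val_cast_of_lt j.2] using congrArg ZMod.val h

noncomputable def meanderIsoReflectionGraph {a b n : ℕ} [NeZero n] (hb : 0 < b)
    (hab : a + b = n) :
    meander [a, b] [n] n ≃g reflectionGraph ((a : ZMod n) + 1) 1 where
  toEquiv := equivZModOfInjective (fun i => ((i : ℕ) : ZMod n) + 1)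
    fun _ _ h => ZMod.natCast_finVal_injective n (add_right_cancel h)
  map_rel_iff' {i j} := by
    have hi := i.isLt
    have hj := j.isLt
    have hcast : ∀ y : ℕ, 0 < y → y ≤ n →
        ((((i : ℕ) : ZMod n) + 1) + (((j : ℕ) : ZMod n) + 1) = y ↔
          (i : ℕ) + j + 2 = y ∨ (i : ℕ) + j + 2 = y + n) := fun y hy hyn => by
      rw [← ZMod.natCast_eq_natCast_iff_of_le_two_mul hy hyn (by omega) (by omega)]
      push_cast
      ring_nf
    simp only [equivZModOfInjective, Equiv.ofBijective_apply, reflectionGraph_adj,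
      meander_pair_single_adj_iff hab, ne_eq, add_left_inj]
    have htop := hcast (a + 1) (by omega) (by omega)
    have hbot := hcast 1 one_pos (by omega)
    push_cast at htop hbot
    simp only [false_or] at hbot
    rw [(ZMod.natCast_finVal_injective n).eq_iff, htop, hbot, Fin.ext_iff]
    exact and_congr_right fun _ => by omega

lemma ZMod.add_self_ne_natCast_add_one {a n : ℕ} (ha : 2 ∣ a) (hn : 2 ∣ n) (u : ZMod n) :
    u + u ≠ a + 1 := fun h => by
  have h2 := congrArg (ZMod.castHom hn (ZMod 2)) h
  rw [map_add, map_add, map_one, map_natCast, (ZMod.natCast_eq_zero_iff a 2).2 ha, zero_add,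
    CharTwo.add_self_eq_zero] at h2
  exact zero_ne_one h2

lemma ZMod.not_preconnected_reflectionGraph {a n p : ℕ} (hp : 3 ≤ p) (hpa : p ∣ a) (hpn : p ∣ n) :
    ¬ (reflectionGraph ((a : ZMod n) + 1) 1).Preconnected := by
  intro h
  let f := ZMod.castHom hpn (ZMod p)
  have hf : ∀ {u v}, (reflectionGraph ((a : ZMod n) + 1) 1).Adj u v → f u + f v = 1 := by
    rintro u v ⟨-, h | h⟩ <;> rw [← map_add, h]
    · rw [map_add, map_natCast, map_one, (ZMod.natCast_eq_zero_iff a p).2 hpa, zero_add]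
    · exact map_one f
  have hreach : ∀ {u v}, (reflectionGraph ((a : ZMod n) + 1) 1).Reachable u v →
      f u = 0 ∨ f u = 1 → f v = 0 ∨ f v = 1 := by
    intro u v huv
    rw [reachable_iff_reflTransGen] at huv
    induction huv with
    | refl => exact id
    | tail _ hadj ih =>
      intro hu
      have := hf hadj
      rcases ih hu with h | h <;> [right; left] <;> linear_combination this - h
  have h2 : f 2 = 0 ∨ f 2 = 1 := hreach (h 1 2) (.inr (map_one f))
  rw [map_ofNat] at h2
  rcases h2 with h2 | h2
  · exact Nat.not_dvd_of_pos_of_lt two_pos (by omega)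
      ((ZMod.natCast_eq_zero_iff 2 p).1 (by exact_mod_cast h2))
  · have h1 : ((1 : ℕ) : ZMod p) = 0 := by push_cast; linear_combination h2
    exact Nat.not_dvd_of_pos_of_lt one_pos (by omega) ((ZMod.natCast_eq_zero_iff 1 p).1 h1)

lemma ZMod.coprime_of_reflectionGraph_iso_pathGraph {a n : ℕ} (ha : 0 < a) (han : a < n)
    (e : reflectionGraph ((a : ZMod n) + 1) 1 ≃g pathGraph n) : a.Coprime n := by
  by_contra hcop
  obtain ⟨p, hp, hpa, hpn⟩ := Nat.Prime.not_coprime_iff_dvd.1 hcop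
  obtain rfl | hp3 : p = 2 ∨ 3 ≤ p := by have := hp.two_le; omega
  · have hst : (a : ZMod n) + 1 ≠ 1 := by
      rw [ne_eq, add_eq_right, ZMod.natCast_eq_zero_iff]
      exact Nat.not_dvd_of_pos_of_lt ha han
    have hfix := ZMod.add_self_ne_natCast_add_one (a := 0) (dvd_zero 2) hpn
    rw [Nat.cast_zero, zero_add] at hfix
    exact (isEmpty_iso_pathGraph_of_forall_exists_two_adj (by omega)
      (reflectionGraph_exists_two_adj hst (ZMod.add_self_ne_natCast_add_one hpa hpn) hfix)).false e
  · exact ZMod.not_preconnected_reflectionGraph hp3 hpa hpn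
      (e.preconnected_iff.2 (pathGraph_preconnected n))

lemma ZMod.exists_add_self_eq_natCast_add_one {a n : ℕ} (h : a.Coprime n) :
    ∃ c : ZMod n, c + c = a + 1 := by
  rcases Nat.even_or_odd a with ⟨r, rfl⟩ | ⟨r, rfl⟩
  · obtain ⟨q, rfl⟩ : Odd n := Nat.odd_iff.2 <| by
      by_contra hn
      have := Nat.dvd_gcd ⟨r, (two_mul r).symm⟩ (Nat.dvd_of_mod_eq_zero (by omega : n % 2 = 0))
      rw [h] at this
      omega
    refine ⟨(r + q + 1 : ℕ), ?_⟩
    have hn : ((2 * q + 1 : ℕ) : ZMod (2 * q + 1)) = 0 := ZMod.natCast_self _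
    push_cast at hn ⊢
    linear_combination hn
  · exact ⟨(r + 1 : ℕ), by push_cast; ring⟩

lemma ZMod.nonempty_reflectionGraph_iso_pathGraph_of_coprime {a n : ℕ} [NeZero n]
    (h : a.Coprime n) :
    Nonempty (reflectionGraph ((a : ZMod n) + 1) 1 ≃g pathGraph n) := by
  obtain ⟨c, hc⟩ := ZMod.exists_add_self_eq_natCast_add_one h
  let w := ZMod.unitOfCoprime a h
  refine ⟨(reflectionGraphAffineIso w⁻¹ c ?_ ?_).trans (pathGraphIsoReflectionGraph n).symm⟩
  · rw [hc, sub_self, mul_zero]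
  · rw [hc, show (1 : ZMod n) - (a + 1) = -w by rw [ZMod.coe_unitOfCoprime]; ring, mul_neg,
      Units.inv_mul]

/-- For positive integers `a`, `b` with `a + b = n`, the
meander graph `M(a, b | n)` consists of a single path if and only if
`gcd(a, n) = 1`. -/
theorem meander_maximal_parabolic_isSinglePath_iff
    (a b n : ℕ) (ha : 0 < a) (hb : 0 < b) (hab : a + b = n) :
    IsSinglePath (meander [a, b] [n] n) ↔ Nat.gcd a n = 1 := by
  have : NeZero n := ⟨by omega⟩
  let ι := meanderIsoReflectionGraph hb hab
  constructor
  · rintro ⟨e⟩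
    exact ZMod.coprime_of_reflectionGraph_iso_pathGraph ha (by omega) (ι.symm.trans e)
  · intro h
    obtain ⟨e⟩ := ZMod.nonempty_reflectionGraph_iso_pathGraph_of_coprime h
    exact ⟨ι.trans e⟩
end

section
/- Let a, b, c, d be positive integers with a + b = c + d = n, let x = (a, b) and y = (c, d). Then for every i ∈ {1, ..., n}, the meander permutation satisfies σ_{x,y}(i) ≡ i + (a − c) (mod n). -/
/-- The "top map" determined by a composition `L`, acting on 1-based positions:
a position `v` lying in a block of `L` is reflected across the middle of that
block (so the middle position of an odd block is fixed). -/
def topFun : List ℕ → ℕ → ℕ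
  | [], v => v
  | a :: L, v => if v ≤ a then a + 1 - v else a + topFun L (v - a)

theorem topFun_pos (L : List ℕ) (v : ℕ) (hv : 1 ≤ v) : 1 ≤ topFun L v := by
  induction L generalizing v with
  | nil => simpa [topFun] using hv
  | cons a L ih =>
    rw [topFun]
    split
    · omega
    · have := ih (v - a) (by omega)
      omega

theorem topFun_le (L : List ℕ) (v : ℕ) (hv : 1 ≤ v) (hv' : v ≤ L.sum) :
    topFun L v ≤ L.sum := by
  induction L generalizing v with
  | nil => simpa [topFun] using hv'
  | cons a L ih =>
    rw [topFun]
    simp only [List.sum_cons] at hv' ⊢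
    split
    · omega
    · have := ih (v - a) (by omega) (by omega)
      omega

theorem topFun_invol (L : List ℕ) (v : ℕ) (hv : 1 ≤ v) :
    topFun L (topFun L v) = v := by
  induction L generalizing v with
  | nil => simp [topFun]
  | cons a L ih =>
    by_cases hva : v ≤ a
    · have hval : topFun (a :: L) v = a + 1 - v := by rw [topFun, if_pos hva]
      rw [hval, topFun, if_pos (by omega : a + 1 - v ≤ a)]
      omega
    · have h1 := topFun_pos L (v - a) (by omega)
      have h2 := ih (v - a) (by omega)
      have hval : topFun (a :: L) v = a + topFun L (v - a) := by
        rw [topFun, if_neg hva]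
      rw [hval, topFun, if_neg (by omega : ¬ a + topFun L (v - a) ≤ a),
        Nat.add_sub_cancel_left, h2]
      omega

/-- The permutation of `{1, …, n}` (represented by `Fin n`, vertex `i`
corresponding to the number `i + 1`) induced by the top (or bottom) map of a
composition `L` of `n`. -/
def topPerm (L : List ℕ) (n : ℕ) (h : L.sum = n) : Equiv.Perm (Fin n) :=
  Function.Involutive.toPerm
    (fun i => ⟨topFun L ((i : ℕ) + 1) - 1, by
      have h1 := topFun_pos L ((i : ℕ) + 1) (by omega)
      have h2 := topFun_le L ((i : ℕ) + 1) (by omega) (by omega)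
      omega⟩)
    (by
      intro i
      have h1 := topFun_pos L ((i : ℕ) + 1) (by omega)
      have h3 := topFun_invol L ((i : ℕ) + 1) (by omega)
      apply Fin.ext
      simp only
      rw [Nat.sub_add_cancel h1, h3]
      omega)

/-- The meander permutation `σ_{x,y} = t ∘ b` of `{1, …, n}`. -/
def meanderPerm (x y : List ℕ) (n : ℕ) (hx : x.sum = n) (hy : y.sum = n) :
    Equiv.Perm (Fin n) :=
  topPerm x n hx * topPerm y n hy

/-- For `x = (a, b)` and `y = (c, d)` with
`a + b = c + d = n`, the meander permutation satisfies
`σ_{x,y}(i) ≡ i + (a - c) (mod n)` for every `i ∈ {1, …, n}`. -/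
theorem meanderPerm_opposite_maximal_parabolic_mod
    (a b c d n : ℕ) (ha : 0 < a) (hb : 0 < b) (hc : 0 < c) (hd : 0 < d)
    (hab : a + b = n) (hcd : c + d = n) :
    ∀ i : Fin n,
      (((meanderPerm [a, b] [c, d] n (by simpa using hab) (by simpa using hcd) i : ℕ) + 1 : ℤ)) ≡
        (((i : ℕ) + 1 : ℤ) + ((a : ℤ) - (c : ℤ))) [ZMOD (n : ℤ)] := by
  intro i
  have hi := i.isLt
  set v : ℕ := (i : ℕ) + 1 with hv
  have hv1 : 1 ≤ v := by omega
  have hvn : v ≤ n := by omega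
  have hb1 := topFun_pos [c, d] v hv1
  have key : (meanderPerm [a, b] [c, d] n (by simpa using hab) (by simpa using hcd) i : ℕ) + 1
      = topFun [a, b] (topFun [c, d] v) := by
    simp only [meanderPerm, topPerm, Function.Involutive.toPerm, Equiv.Perm.coe_mul,
      Function.comp_apply, Equiv.coe_fn_mk]
    rw [Nat.sub_add_cancel hb1, Nat.sub_add_cancel (topFun_pos _ _ (topFun_pos _ _ hv1))]
  have key2 : ((meanderPerm [a, b] [c, d] n (by simpa using hab) (by simpa using hcd) i : ℕ) : ℤ) + 1
      = ((topFun [a, b] (topFun [c, d] v) : ℕ) : ℤ) := by exact_mod_cast key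
  rw [key2]
  have hw : topFun [c, d] v = if v ≤ c then c + 1 - v else n + c + 1 - v := by
    rw [topFun]
    split
    · rfl
    · rw [topFun, if_pos (by omega)]
      omega
  set w := topFun [c, d] v with hwdef
  have hw1 : 1 ≤ w := hb1
  have hwn : w ≤ n := by rw [hw]; split <;> omega
  have hval : topFun [a, b] w = if w ≤ a then a + 1 - w else n + a + 1 - w := by
    rw [topFun]
    split
    · rfl
    · rw [topFun, if_pos (by omega)]
      omega
  by_cases h1 : v ≤ c
  · rw [if_pos h1] at hw
    by_cases h2 : w ≤ a
    · rw [hval, if_pos h2]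
      exact Int.modEq_iff_dvd.mpr ⟨0, by omega⟩
    · rw [hval, if_neg h2]
      exact Int.modEq_iff_dvd.mpr ⟨-1, by omega⟩
  · rw [if_neg h1] at hw
    by_cases h2 : w ≤ a
    · rw [hval, if_pos h2]
      exact Int.modEq_iff_dvd.mpr ⟨1, by omega⟩
    · rw [hval, if_neg h2]
      exact Int.modEq_iff_dvd.mpr ⟨0, by omega⟩
end

section
/- Let x = (a_1, ..., a_m) and y = (b_1, ..., b_t) be compositions of n. If there exists r with 1 ≤ r ≤ min{m, t} such that a_1 + ... + a_r = b_1 + ... + b_r < n, then the meander graph M(x | y) does not consist of a single path. -/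
namespace SimpleGraph

variable {V : Type*} {G : SimpleGraph V}

lemma Reachable.iff_of_adj_iff (p : V → Prop) (hp : ∀ u v, G.Adj u v → (p u ↔ p v))
    {u v : V} (h : G.Reachable u v) : p u ↔ p v := by
  obtain ⟨w⟩ := h
  induction w with
  | nil => rfl
  | cons hadj _ ih => exact (hp _ _ hadj).trans ih

lemma not_preconnected_of_adj_iff (p : V → Prop) (hp : ∀ u v, G.Adj u v → (p u ↔ p v))
    {a b : V} (ha : p a) (hb : ¬ p b) : ¬ G.Preconnected :=
  fun hG ↦ hb (((hG a b).iff_of_adj_iff p hp).1 ha)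

end SimpleGraph

lemma IsSinglePath.preconnected {n : ℕ} {G : SimpleGraph (Fin n)} (h : IsSinglePath G) :
    G.Preconnected :=
  let ⟨φ⟩ := h
  φ.preconnected_iff.2 (SimpleGraph.pathGraph_preconnected n)

lemma blockAdj.le_sum_take_iff {L : List ℕ} {u v : ℕ} (h : blockAdj L u v) (r : ℕ) :
    u ≤ (L.take r).sum ↔ v ≤ (L.take r).sum := by
  obtain ⟨k, -, hu, hu', hv, hv', -, -⟩ := h
  rcases lt_or_ge k r with hkr | hrk
  · have : (L.take (k + 1)).sum ≤ (L.take r).sum := L.monotone_sum_take hkr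
    omega
  · have : (L.take r).sum ≤ (L.take k).sum := L.monotone_sum_take hrk
    omega

lemma meander_adj_le_sum_take_iff {x y : List ℕ} {n r : ℕ}
    (heq : (x.take r).sum = (y.take r).sum) {u v : Fin n} (h : (meander x y n).Adj u v) :
    (u : ℕ) + 1 ≤ (x.take r).sum ↔ (v : ℕ) + 1 ≤ (x.take r).sum := by
  rcases h with h | h
  · exact h.le_sum_take_iff r
  · rw [heq]
    exact h.le_sum_take_iff r

lemma List.sum_take_pos {L : List ℕ} (hpos : ∀ a ∈ L, 0 < a) {r : ℕ} (hr : 1 ≤ r)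
    (hrL : r ≤ L.length) : 0 < (L.take r).sum :=
  List.sum_pos _ (fun a ha ↦ hpos a (List.mem_of_mem_take ha))
    (List.ne_nil_of_length_pos (by rw [List.length_take]; omega))

theorem not_isSinglePath_of_partial_sums_eq_general
    (n : ℕ) (x y : List ℕ)
    (hxpos : ∀ a ∈ x, 0 < a)
    (r : ℕ) (hr : 1 ≤ r) (hrx : r ≤ x.length)
    (heq : (x.take r).sum = (y.take r).sum) (hlt : (x.take r).sum < n) :
    ¬ IsSinglePath (meander x y n) := by
  intro hpath
  have hs := List.sum_take_pos hxpos hr hrx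
  let below : Fin n := ⟨(x.take r).sum - 1, by omega⟩
  let above : Fin n := ⟨(x.take r).sum, hlt⟩
  refine SimpleGraph.not_preconnected_of_adj_iff (fun v : Fin n ↦ (v : ℕ) + 1 ≤ (x.take r).sum)
    (fun _ _ ↦ meander_adj_le_sum_take_iff heq) (a := below) (b := above) ?_ ?_ hpath.preconnected
  · change (x.take r).sum - 1 + 1 ≤ (x.take r).sum
    omega
  · change ¬ (x.take r).sum + 1 ≤ (x.take r).sum
    omega

/-- If some initial segments of the compositions `x` and
`y` (of common length `r ≥ 1`) have equal sums strictly less than `n`, then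
the meander graph `M(x | y)` does not consist of a single path. -/
theorem not_isSinglePath_of_partial_sums_eq
    (n : ℕ) (x y : List ℕ) (hx : x.sum = n) (hy : y.sum = n)
    (hxpos : ∀ a ∈ x, 0 < a) (hypos : ∀ b ∈ y, 0 < b)
    (r : ℕ) (hr : 1 ≤ r) (hrx : r ≤ x.length) (hry : r ≤ y.length)
    (heq : (x.take r).sum = (y.take r).sum) (hlt : (x.take r).sum < n) :
    ¬ IsSinglePath (meander x y n) :=
  not_isSinglePath_of_partial_sums_eq_general n x y hxpos r hr hrx heq hlt
end

section
/- Let a, b, c be positive integers with a + b + c = n and gcd(a + b, b + c) = 1. Then the meander graph M(a, b, c | n) has no vertex of degree 0; moreover, the number of vertices of degree 1 in M(a, b, c | n) equals the number of odd integers among a, b, c, n. -/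
namespace SimpleGraph

variable {V : Type*} {G : SimpleGraph V} {σ τ : V → V}

theorem ncard_neighborSet_ne_zero (hN : ∀ v, G.neighborSet v = {σ v, τ v} \ {v})
    (hne : ∀ v, σ v ≠ τ v) (v : V) : (G.neighborSet v).ncard ≠ 0 := by
  have hfin : (G.neighborSet v).Finite := by
    rw [hN]; exact (Set.toFinite _).sdiff
  by_cases hσ : σ v = v
  · refine Set.ncard_ne_zero_of_mem (a := τ v) ?_ hfin
    rw [hN]; exact ⟨Or.inr rfl, fun hτ => hne v (hσ.trans hτ.symm)⟩
  · exact Set.ncard_ne_zero_of_mem (a := σ v) (by rw [hN]; exact ⟨Or.inl rfl, hσ⟩) hfin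

theorem ncard_neighborSet_eq_one_iff (hN : ∀ v, G.neighborSet v = {σ v, τ v} \ {v})
    (hne : ∀ v, σ v ≠ τ v) (v : V) :
    (G.neighborSet v).ncard = 1 ↔ σ v = v ∨ τ v = v := by
  rw [hN]
  by_cases hσ : σ v = v
  · have : ({σ v, τ v} \ {v} : Set V) = {τ v} := by
      ext w; simp only [Set.mem_sdiff, Set.mem_insert_iff, Set.mem_singleton_iff]; grind
    rw [this, Set.ncard_singleton]; exact iff_of_true rfl (Or.inl hσ)
  by_cases hτ : τ v = v
  · have : ({σ v, τ v} \ {v} : Set V) = {σ v} := by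
      ext w; simp only [Set.mem_sdiff, Set.mem_insert_iff, Set.mem_singleton_iff]; grind
    rw [this, Set.ncard_singleton]; exact iff_of_true rfl (Or.inr hτ)
  · have : ({σ v, τ v} \ {v} : Set V) = {σ v, τ v} := by
      ext w; simp only [Set.mem_sdiff, Set.mem_insert_iff, Set.mem_singleton_iff]; grind
    rw [this, Set.ncard_pair (hne v)]; exact iff_of_false (by norm_num) (by tauto)

theorem ncard_setOf_ncard_neighborSet_eq_one [Finite V]
    (hN : ∀ v, G.neighborSet v = {σ v, τ v} \ {v}) (hne : ∀ v, σ v ≠ τ v) :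
    {v | (G.neighborSet v).ncard = 1}.ncard =
      (Function.fixedPoints σ).ncard + (Function.fixedPoints τ).ncard := by
  have hunion : {v | (G.neighborSet v).ncard = 1} =
      Function.fixedPoints σ ∪ Function.fixedPoints τ := by
    ext v; exact ncard_neighborSet_eq_one_iff hN hne v
  have hdisj : Disjoint (Function.fixedPoints σ) (Function.fixedPoints τ) :=
    Set.disjoint_left.2 fun v (hσ : σ v = v) (hτ : τ v = v) => hne v (hσ.trans hτ.symm)
  rw [hunion, Set.ncard_union_eq hdisj]

end SimpleGraph

theorem meander_neighborSet {x y : List ℕ} {n : ℕ} {σ τ : Fin n → Fin n}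
    (hσ : ∀ v w : Fin n, blockAdj x (v + 1) (w + 1) ↔ w = σ v ∧ w ≠ v)
    (hτ : ∀ v w : Fin n, blockAdj y (v + 1) (w + 1) ↔ w = τ v ∧ w ≠ v) (v : Fin n) :
    (meander x y n).neighborSet v = {σ v, τ v} \ {v} := by
  ext w
  simp only [SimpleGraph.mem_neighborSet, meander, hσ, hτ, Set.mem_sdiff, Set.mem_insert_iff,
    Set.mem_singleton_iff]
  tauto

theorem blockAdj_singleton_iff (n u w : ℕ) :
    blockAdj [n] u w ↔ 0 < u ∧ u ≤ n ∧ 0 < w ∧ w ≤ n ∧ u + w = n + 1 ∧ u ≠ w := by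
  constructor
  · rintro ⟨k, hk, h⟩
    obtain rfl : k = 0 := by simpa using hk
    simpa using h
  · intro h
    exact ⟨0, by simp, by simpa using h⟩

theorem blockAdj_triple_iff (a b c u w : ℕ) :
    blockAdj [a, b, c] u w ↔
      (0 < u ∧ u ≤ a ∧ 0 < w ∧ w ≤ a ∧ u + w = a + 1 ∧ u ≠ w) ∨
      (a < u ∧ u ≤ a + b ∧ a < w ∧ w ≤ a + b ∧ u + w = 2 * a + b + 1 ∧ u ≠ w) ∨
      (a + b < u ∧ u ≤ a + b + c ∧ a + b < w ∧ w ≤ a + b + c ∧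
        u + w = 2 * a + 2 * b + c + 1 ∧ u ≠ w) := by
  constructor
  · rintro ⟨k, hk, h⟩
    simp only [List.length_cons, List.length_nil] at hk
    interval_cases k <;> simp at h <;> omega
  · rintro (h | h | h)
    · exact ⟨0, by simp, by simpa using h⟩
    · exact ⟨1, by simp, by simp; omega⟩
    · exact ⟨2, by simp, by simp; omega⟩

theorem blockAdj_singleton_iff_eq_rev {n : ℕ} (v w : Fin n) :
    blockAdj [n] (v + 1) (w + 1) ↔ w = v.rev ∧ w ≠ v := by
  rw [blockAdj_singleton_iff]
  simp only [Fin.ext_iff, Fin.val_rev]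
  omega

/-- Each block of `(a, b, c)` reflected onto itself, in the `0`-based indexing of `Fin`. -/
def tripleReflect (a b c : ℕ) (v : Fin (a + b + c)) : Fin (a + b + c) :=
  ⟨if (v : ℕ) < a then a - 1 - v
    else if (v : ℕ) < a + b then 2 * a + b - 1 - v else 2 * a + 2 * b + c - 1 - v,
    by split_ifs <;> omega⟩

theorem blockAdj_triple_iff_eq_tripleReflect {a b c : ℕ} (v w : Fin (a + b + c)) :
    blockAdj [a, b, c] (v + 1) (w + 1) ↔ w = tripleReflect a b c v ∧ w ≠ v := by
  have := v.isLt
  have := w.isLt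
  rw [blockAdj_triple_iff]
  simp only [tripleReflect, Fin.ext_iff]
  split_ifs <;> omega

theorem tripleReflect_ne_rev {a b c : ℕ} (ha : 0 < a) (hc : 0 < c) (hmiddle : a = c → b = 0)
    (v : Fin (a + b + c)) : tripleReflect a b c v ≠ v.rev := by
  have := v.isLt
  simp only [tripleReflect, ne_eq, Fin.ext_iff, Fin.val_rev]
  split_ifs <;> omega

theorem ncard_setOf_two_mul_add_one_eq {N x : ℕ} (hx : x ≤ 2 * N) :
    {v : Fin N | 2 * (v : ℕ) + 1 = x}.ncard = x % 2 := by
  rcases Nat.even_or_odd' x with ⟨m, rfl | rfl⟩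
  · have : {v : Fin N | 2 * (v : ℕ) + 1 = 2 * m} = ∅ := by
      ext v; simp only [Set.mem_ofPred_eq, Set.mem_empty_iff_false, iff_false]; omega
    rw [this, Set.ncard_empty]; omega
  · have : {v : Fin N | 2 * (v : ℕ) + 1 = 2 * m + 1} = {⟨m, by omega⟩} := by
      ext v; simp only [Set.mem_ofPred_eq, Set.mem_singleton_iff, Fin.ext_iff]; omega
    rw [this, Set.ncard_singleton]; omega

theorem ncard_fixedPoints_rev (n : ℕ) : (Function.fixedPoints (Fin.rev (n := n))).ncard = n % 2 := by
  have : Function.fixedPoints (Fin.rev (n := n)) = {v : Fin n | 2 * (v : ℕ) + 1 = n} := by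
    ext v
    simp only [Function.mem_fixedPoints, Function.IsFixedPt, Set.mem_ofPred_eq, Fin.ext_iff,
      Fin.val_rev]
    omega
  rw [this, ncard_setOf_two_mul_add_one_eq (by omega)]

theorem ncard_fixedPoints_tripleReflect (a b c : ℕ) :
    (Function.fixedPoints (tripleReflect a b c)).ncard = a % 2 + b % 2 + c % 2 := by
  have hfix : Function.fixedPoints (tripleReflect a b c) =
      {v : Fin (a + b + c) | 2 * (v : ℕ) + 1 = a} ∪
        ({v | 2 * (v : ℕ) + 1 = 2 * a + b} ∪ {v | 2 * (v : ℕ) + 1 = 2 * a + 2 * b + c}) := by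
    ext v
    have := v.isLt
    simp only [Function.mem_fixedPoints, Function.IsFixedPt, tripleReflect, Fin.ext_iff,
      Set.mem_union, Set.mem_ofPred_eq]
    split_ifs <;> omega
  have hdisj₁ : Disjoint {v : Fin (a + b + c) | 2 * (v : ℕ) + 1 = a}
      ({v | 2 * (v : ℕ) + 1 = 2 * a + b} ∪ {v | 2 * (v : ℕ) + 1 = 2 * a + 2 * b + c}) := by
    rw [Set.disjoint_left]; intro v; simp only [Set.mem_union, Set.mem_ofPred_eq]; omega
  have hdisj₂ : Disjoint {v : Fin (a + b + c) | 2 * (v : ℕ) + 1 = 2 * a + b}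
      {v | 2 * (v : ℕ) + 1 = 2 * a + 2 * b + c} := by
    rw [Set.disjoint_left]; intro v; simp only [Set.mem_ofPred_eq]; omega
  rw [hfix, Set.ncard_union_eq hdisj₁, Set.ncard_union_eq hdisj₂,
    ncard_setOf_two_mul_add_one_eq (by omega), ncard_setOf_two_mul_add_one_eq (by omega),
    ncard_setOf_two_mul_add_one_eq (by omega)]
  omega

theorem List.countP_odd_eq_sum_mod_two (l : List ℕ) :
    l.countP (fun m => m % 2 == 1) = (l.map (· % 2)).sum := by
  induction l with
  | nil => rfl
  | cons m l ih =>
    rw [List.countP_cons, ih, List.map_cons, List.sum_cons]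
    rcases Nat.mod_two_eq_zero_or_one m with h | h <;> simp [h, Nat.add_comm]

theorem meander_submaximal_parabolic_degree_one_count_general
    (a b c n : ℕ) (ha : 0 < a) (hc : 0 < c) (habc : a + b + c = n)
    (hg : Nat.gcd (a + b) (b + c) = 1) :
    (∀ v : Fin n, ((meander [a, b, c] [n] n).neighborSet v).ncard ≠ 0) ∧
    { v : Fin n | ((meander [a, b, c] [n] n).neighborSet v).ncard = 1 }.ncard =
      [a, b, c, n].countP (fun m => m % 2 == 1) := by
  subst habc
  have hmiddle : a = c → b = 0 := by
    rintro rfl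
    rw [Nat.add_comm b a, Nat.gcd_self] at hg
    omega
  have hN := meander_neighborSet (blockAdj_triple_iff_eq_tripleReflect (a := a) (b := b) (c := c))
    blockAdj_singleton_iff_eq_rev
  have hne := tripleReflect_ne_rev ha hc hmiddle
  refine ⟨SimpleGraph.ncard_neighborSet_ne_zero hN hne, ?_⟩
  rw [SimpleGraph.ncard_setOf_ncard_neighborSet_eq_one hN hne, ncard_fixedPoints_tripleReflect,
    ncard_fixedPoints_rev, List.countP_odd_eq_sum_mod_two]
  simp only [List.map_cons, List.map_nil, List.sum_cons, List.sum_nil]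
  omega

/-- If `a + b + c = n` with `gcd(a + b, b + c) = 1`, then
the meander graph `M(a, b, c | n)` has no vertex of degree `0`, and its number
of vertices of degree `1` equals the number of odd integers among
`a`, `b`, `c`, `n`. -/
theorem meander_submaximal_parabolic_degree_one_count
    (a b c n : ℕ) (ha : 0 < a) (hb : 0 < b) (hc : 0 < c) (habc : a + b + c = n)
    (hg : Nat.gcd (a + b) (b + c) = 1) :
    (∀ v : Fin n, ((meander [a, b, c] [n] n).neighborSet v).ncard ≠ 0) ∧
    { v : Fin n | ((meander [a, b, c] [n] n).neighborSet v).ncard = 1 }.ncard =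
      [a, b, c, n].countP (fun m => m % 2 == 1) :=
  meander_submaximal_parabolic_degree_one_count_general a b c n ha hc habc hg
end
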